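/- Let n ≥ 2 be an integer. The power series f₁(r) = −1 + Σ_{m=1}^∞ [m·(2m−2)! / (2^{3m−1}·(m!)²·∏_{j=0}^{m−1}(n+2j))]·r^{2m} converges for every real r, and the function f₁ satisfies f₁''(r) + ((n−1)/r − r/2)·f₁'(r) + (1/2)·f₁(r) = 0 for all r > 0. -/

import Mathlib

/-- The coefficient of `r^{2m}` (for `m ≥ 1`) in the radial Jacobi function `f₁` on the
self-shrinking hyperplane `ℝⁿ ⊂ ℝⁿ⁺¹`. -/
noncomputable def hplaneCoef (n m : ℕ) : ℝ :=
  ((m : ℝ) * (Nat.factorial (2*m - 2) : ℝ)) /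
    ((2:ℝ)^(3*m - 1) * ((Nat.factorial m : ℝ))^2 *
      ∏ j ∈ Finset.range m, ((n : ℝ) + 2*(j : ℝ)))

/-- `f₁(r) = −1 + Σ_{m≥1} a_{2m} r^{2m}`. -/
noncomputable def fOne (n : ℕ) (r : ℝ) : ℝ :=
  -1 + ∑' m : ℕ, hplaneCoef n (m+1) * r^(2*(m+1))

/-!
Termwise differentiation is legitimate because the two-term recurrence
`a_{k+1} (2k+2)(2k+n) = a_k (2k-1)/2` satisfied by the coefficients `a_k` of `r^{2k}` makes them
bounded by `1/k!`, so the series and its derived series converge absolutely on all of `ℝ`.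
Substituting the series into the equation, the coefficient of `r^{2k}` vanishes for `k ≥ 1` by
that recurrence, and the constant term `2n a_1 - 1/2` vanishes because `a_1 = 1/(4n)`.
-/

open scoped Nat

theorem Nat.two_mul_succ_sub_one (m : ℕ) : 2 * (m + 1) - 1 = 2 * m + 1 := by omega

def EntireSeries (c : ℕ → ℝ) (p : ℕ → ℕ) : Prop :=
  ∀ S : ℝ, 0 ≤ S → Summable fun m => |c m| * S ^ p m

namespace EntireSeries

variable {c : ℕ → ℝ} {p : ℕ → ℕ}

theorem summable (h : EntireSeries c p) (x : ℝ) : Summable fun m => c m * x ^ p m :=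
  .of_norm_bounded (h |x| (abs_nonneg x)) fun m => by
    rw [Real.norm_eq_abs, abs_mul, abs_pow]

theorem derivSeries (h : EntireSeries c p) :
    EntireSeries (fun m => c m * p m) (fun m => p m - 1) := by
  intro S hS
  -- `p ≤ 2 ^ p` absorbs the factor `p` into a larger radius
  refine .of_nonneg_of_le (fun m => by positivity) (fun m => ?_) (h (2 * (S + 1)) (by positivity))
  have hp : (p m : ℝ) ≤ 2 ^ p m := by exact_mod_cast (Nat.lt_two_pow_self).le
  calc |c m * p m| * S ^ (p m - 1) ≤ |c m| * (2 ^ p m * (S + 1) ^ p m) := by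
        rw [abs_mul, Nat.abs_cast, mul_assoc]
        gcongr
        calc S ^ (p m - 1) ≤ (S + 1) ^ (p m - 1) := by gcongr; linarith
          _ ≤ (S + 1) ^ p m := pow_le_pow_right₀ (by linarith) (Nat.sub_le _ _)
    _ = |c m| * (2 * (S + 1)) ^ p m := by rw [mul_pow]

theorem hasDerivAt (h : EntireSeries c p) (x : ℝ) :
    HasDerivAt (fun y => ∑' m, c m * y ^ p m) (∑' m, c m * p m * x ^ (p m - 1)) x := by
  set R := |x| + 1
  have hx : x ∈ Metric.ball (0 : ℝ) R := by
    rw [Metric.mem_ball, Real.dist_eq, sub_zero]; exact lt_add_one _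
  have hterm (m : ℕ) (y : ℝ) :
      HasDerivAt (fun z => c m * z ^ p m) (c m * p m * y ^ (p m - 1)) y := by
    simpa only [mul_assoc] using (hasDerivAt_pow (p m) y).const_mul (c m)
  have hbound (m : ℕ) (y : ℝ) (hy : y ∈ Metric.ball (0 : ℝ) R) :
      ‖c m * p m * y ^ (p m - 1)‖ ≤ |c m * p m| * R ^ (p m - 1) := by
    rw [Metric.mem_ball, Real.dist_eq, sub_zero] at hy
    rw [Real.norm_eq_abs, abs_mul (c m * p m), abs_pow]
    gcongr
  exact hasDerivAt_tsum_of_isPreconnected (h.derivSeries R (by positivity)) Metric.isOpen_ball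
    (convex_ball 0 R).isPreconnected (fun m y _ => hterm m y) hbound hx (h.summable x) hx

theorem deriv_tsum (h : EntireSeries c p) :
    deriv (fun y => ∑' m, c m * y ^ p m) = fun x => ∑' m, c m * p m * x ^ (p m - 1) :=
  funext fun x => (h.hasDerivAt x).deriv

end EntireSeries

section

variable {n : ℕ}

theorem hplaneCoef_nonneg (n m : ℕ) : 0 ≤ hplaneCoef n m := by
  unfold hplaneCoef
  have : 0 ≤ ∏ j ∈ Finset.range m, ((n : ℝ) + 2 * (j : ℝ)) :=
    Finset.prod_nonneg fun j _ => by positivity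
  positivity

theorem hplaneCoef_one (n : ℕ) : hplaneCoef n 1 = 1 / (4 * n) := by
  norm_num [hplaneCoef]

theorem hplaneCoef_succ_succ (hn : 0 < n) (m : ℕ) :
    hplaneCoef n (m + 2) * ((2 * m + 4) * (2 * m + 2 + n)) =
      hplaneCoef n (m + 1) * ((2 * m + 1) / 2) := by
  have hprod : ∏ j ∈ Finset.range (m + 1), ((n : ℝ) + 2 * (j : ℝ)) ≠ 0 :=
    Finset.prod_ne_zero_iff.2 fun j _ => by positivity
  unfold hplaneCoef
  rw [show 2 * (m + 2) - 2 = 2 * m + 1 + 1 by omega, show 3 * (m + 2) - 1 = 3 * m + 5 by omega,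
    show 2 * (m + 1) - 2 = 2 * m by omega, show 3 * (m + 1) - 1 = 3 * m + 2 by omega,
    Finset.prod_range_succ _ (m + 1), Nat.factorial_succ (m + 1), Nat.factorial_succ (2 * m + 1),
    Nat.factorial_succ (2 * m)]
  have : (n : ℝ) + 2 * ((m + 1 : ℕ) : ℝ) ≠ 0 := by positivity
  field_simp
  push_cast
  ring

theorem hplaneCoef_le_inv_factorial (hn : 0 < n) (m : ℕ) :
    hplaneCoef n (m + 1) ≤ 1 / (m + 1)! := by
  induction m with
  | zero =>
    have : (1 : ℝ) ≤ 4 * n := by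
      have : (1 : ℝ) ≤ n := by exact_mod_cast hn
      linarith
    simpa [hplaneCoef_one] using one_div_le_one_div_of_le one_pos this
  | succ m ih =>
    have hrec := hplaneCoef_succ_succ hn m
    have hcoef := hplaneCoef_nonneg n (m + 2)
    -- the ratio `a_{m+2} / a_{m+1} = (2m + 1) / (4 (m + 2) (2m + 2 + n))` is at most `1 / (m + 2)`
    rw [Nat.factorial_succ (m + 1), Nat.cast_mul, le_div_iff₀ (by positivity)]
    rw [le_div_iff₀ (by positivity)] at ih
    push_cast
    nlinarith

theorem entireSeries_hplaneCoef (hn : 0 < n) :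
    EntireSeries (fun m => hplaneCoef n (m + 1)) (fun m => 2 * (m + 1)) := by
  intro S hS
  refine .of_nonneg_of_le (fun m => by positivity) (fun m => ?_)
    ((summable_nat_add_iff 1).2 (Real.summable_pow_div_factorial (S ^ 2)))
  rw [abs_of_nonneg (hplaneCoef_nonneg n _), pow_mul, div_eq_mul_one_div _ (_ : ℝ), mul_comm]
  gcongr
  exact hplaneCoef_le_inv_factorial hn m

theorem hplaneSeries_ode (hn : 0 < n) {r : ℝ} (hr : 0 < r) :
    (∑' m : ℕ, hplaneCoef n (m + 1) * (2 * (m + 1)) * (2 * m + 1) * r ^ (2 * m)) +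
        ((n - 1) / r - r / 2) * ∑' m : ℕ, hplaneCoef n (m + 1) * (2 * (m + 1)) * r ^ (2 * m + 1) +
      1 / 2 * (-1 + ∑' m : ℕ, hplaneCoef n (m + 1) * r ^ (2 * (m + 1))) = 0 := by
  have H := entireSeries_hplaneCoef hn
  have s0 := H.summable r
  have s1 := H.derivSeries.summable r
  have s2 := H.derivSeries.derivSeries.summable r
  simp only [Nat.two_mul_succ_sub_one, Nat.add_sub_cancel] at s1 s2
  push_cast at s1 s2
  set A := ∑' m : ℕ, hplaneCoef n (m + 1) * (2 * (m + 1)) * (2 * m + 1) * r ^ (2 * m)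
  set B := ∑' m : ℕ, hplaneCoef n (m + 1) * (2 * (m + 1)) * r ^ (2 * m + 1)
  set C := ∑' m : ℕ, hplaneCoef n (m + 1) * r ^ (2 * (m + 1))
  set T : ℕ → ℝ := fun m => hplaneCoef n (m + 1) * ((2 * m + 2) * (2 * m + n)) * r ^ (2 * m)
  have hA : HasSum T (A + (n - 1) / r * B) := by
    refine (s2.hasSum.add (s1.hasSum.mul_left ((n - 1) / r))).congr_fun fun m => ?_
    field_simp
    ring
  have hU : HasSum (fun m : ℕ => hplaneCoef n (m + 1) * ((2 * m + 1) / 2) * r ^ (2 * m + 2))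
      (r / 2 * B - 1 / 2 * C) := by
    refine ((s1.hasSum.mul_left (r / 2)).sub (s0.hasSum.mul_left (1 / 2))).congr_fun fun m => ?_
    ring
  have hT : HasSum T (T 0 + (r / 2 * B - 1 / 2 * C)) := by
    refine HasSum.zero_add (hU.congr_fun fun m => ?_)
    simp only [T]
    push_cast
    linear_combination r ^ (2 * m + 2) * hplaneCoef_succ_succ hn m
  have hT0 : T 0 = 1 / 2 := by
    have : (n : ℝ) ≠ 0 := by positivity
    norm_num [T, hplaneCoef_one]
    field_simp
    norm_num
  linear_combination hA.unique hT + hT0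

theorem deriv_fOne (hn : 0 < n) :
    deriv (fOne n) = fun r => ∑' m : ℕ, hplaneCoef n (m + 1) * (2 * (m + 1)) * r ^ (2 * m + 1) := by
  have h := (entireSeries_hplaneCoef hn).deriv_tsum
  simp only [Nat.two_mul_succ_sub_one] at h
  push_cast at h
  exact (deriv_const_add' (-1)).trans h

theorem deriv_deriv_fOne (hn : 0 < n) :
    deriv (deriv (fOne n)) =
      fun r => ∑' m : ℕ, hplaneCoef n (m + 1) * (2 * (m + 1)) * (2 * m + 1) * r ^ (2 * m) := by
  have h := (entireSeries_hplaneCoef hn).derivSeries.deriv_tsum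
  simp only [Nat.two_mul_succ_sub_one, Nat.add_sub_cancel] at h
  push_cast at h
  rw [deriv_fOne hn]
  exact h

end

/-- The series defining `f₁` converges for every real `r`, and `f₁` satisfies
`f₁'' + ((n−1)/r − r/2)f₁' + (1/2)f₁ = 0` for all `r > 0`. -/
theorem stmt12 (n : ℕ) (hn : 2 ≤ n) :
    (∀ r : ℝ, Summable fun m : ℕ => hplaneCoef n (m+1) * r^(2*(m+1))) ∧
    (∀ r : ℝ, 0 < r →
      deriv (deriv (fOne n)) r + (((n : ℝ) - 1)/r - r/2) * deriv (fOne n) r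
        + (1/2) * fOne n r = 0) := by
  have hn' : 0 < n := by omega
  refine ⟨(entireSeries_hplaneCoef hn').summable, fun r hr => ?_⟩
  rw [deriv_deriv_fOne hn', deriv_fOne hn']
  exact hplaneSeries_ode hn' hr
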